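/- Let $\frak{a}, \frak{b} \subseteq \mathbb{C}[T_1,\ldots,T_d]$ be non-zero monomial ideals with Newton polyhedra $P_{\frak{a}}, P_{\frak{b}}$, and let $\alpha \in \mathbb{Q}_{>0}$, $\beta \in \mathbb{Q}_{\geq 0}$. Then the following are equivalent: (i) for every $\mathbf{q} \in \mathbb{R}^d_{\geq 0}$ with $\sum_i \mathbf{q}_i \mathbf{u}_i \geq 1$ for all $\mathbf{u} \in P_{\frak{a}}$, one has $\beta \cdot \inf_{\mathbf{v} \in P_{\frak{b}}} \sum_i \mathbf{q}_i \mathbf{v}_i + \sum_i \mathbf{q}_i \geq \alpha$; (ii) $\beta \cdot P_{\frak{b}} + \mathbf{e} \subseteq \alpha \cdot P_{\frak{a}}$, where $\mathbf{e} = (1,\ldots,1)$. -/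

import Mathlib

/-! The implication (ii) ⇒ (i) is a one-line computation: pairing `α • u = β • v + e` with `q`
gives `α ≤ α ⟨q, u⟩ = β ⟨q, v⟩ + ∑ qᵢ`. For (i) ⇒ (ii), the Newton polyhedron `P_𝔞` is a closed
convex upper set: by Dickson's lemma it is the Minkowski sum of the convex hull of the finitely
many minimal exponents and the positive orthant. A point `α⁻¹ (β v + e)` outside it is therefore
separated from it by a hyperplane with nonnegative normal, and since the point is itself
nonnegative the separating functional can be rescaled to a `q` with `⟨q, u⟩ ≥ 1` on `P_𝔞`;
condition (i) for this `q` then forces `⟨q, α⁻¹ (β v + e)⟩ ≥ 1`, a contradiction. -/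

open Set Pointwise

variable {ι : Type*}

def newtonPolyhedron (M : Set (ι → ℕ)) : Set (ι → ℝ) :=
  convexHull ℝ ((fun (u : ι → ℕ) (i : ι) => (u i : ℝ)) '' M)

section NewtonPolyhedron

variable {M : Set (ι → ℕ)}

theorem newtonPolyhedron_subset_Ici_zero : newtonPolyhedron M ⊆ Ici 0 :=
  convexHull_min (by rintro _ ⟨u, -, rfl⟩ i; positivity) (convex_Ici 0)

theorem mem_newtonPolyhedron_of_le [Finite ι] (hM : IsUpperSet M) {u : ι → ℕ} (hu : u ∈ M)
    {y : ι → ℝ} (huy : (fun i => (u i : ℝ)) ≤ y) : y ∈ newtonPolyhedron M := by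
  -- `y` lies in the unit cube at `⌊y⌋₊`, whose vertices are lattice points above `u`.
  let cube : Set (ι → ℝ) := univ.pi fun i => {(⌊y i⌋₊ : ℝ), (⌊y i⌋₊ : ℝ) + 1}
  have hy : y ∈ convexHull ℝ cube := by
    rw [convexHull_pi]
    intro i _
    show y i ∈ convexHull ℝ _
    rw [convexHull_pair, segment_eq_Icc (by linarith)]
    have hyi : 0 ≤ y i := (huy i).trans' (Nat.cast_nonneg _)
    exact ⟨Nat.floor_le hyi, (Nat.lt_floor_add_one _).le⟩
  refine convexHull_mono ?_ hy
  intro x hx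
  have hnat : ∀ i, ∃ n : ℕ, u i ≤ n ∧ (n : ℝ) = x i := by
    intro i
    have hui : u i ≤ ⌊y i⌋₊ := Nat.le_floor (huy i)
    rcases hx i (mem_univ i) with h | h
    · exact ⟨_, hui, h.symm⟩
    · exact ⟨⌊y i⌋₊ + 1, hui.trans (Nat.le_succ _), by rw [h]; push_cast; rfl⟩
  choose z huz hzx using hnat
  exact ⟨z, hM huz hu, funext hzx⟩

theorem isUpperSet_newtonPolyhedron [Finite ι] (hM : IsUpperSet M) :
    IsUpperSet (newtonPolyhedron M) := by
  intro x y hxy hx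
  have hsub : (fun (u : ι → ℕ) (i : ι) => (u i : ℝ)) '' M + Ici 0 ⊆ newtonPolyhedron M := by
    rintro _ ⟨_, ⟨u, hu, rfl⟩, t, ht, rfl⟩
    exact mem_newtonPolyhedron_of_le hM hu (le_add_of_nonneg_right ht)
  refine convexHull_min hsub (convex_convexHull ℝ _) ?_
  rw [convexHull_add, (convex_Ici 0).convexHull_eq]
  exact ⟨x, hx, y - x, sub_nonneg.2 hxy, add_sub_cancel _ _⟩

theorem exists_finite_newtonPolyhedron_eq_convexHull_add_Ici [Finite ι] (hM : IsUpperSet M) :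
    ∃ F : Set (ι → ℕ), F.Finite ∧
      newtonPolyhedron M = convexHull ℝ ((fun (u : ι → ℕ) (i : ι) => (u i : ℝ)) '' F) + Ici 0 := by
  refine ⟨{u | Minimal (· ∈ M) u}, WellQuasiOrderedLE.finite_of_isAntichain
    (setOfPred_minimal_antichain _), Subset.antisymm ?_ ?_⟩
  · refine convexHull_min ?_ ((convex_convexHull ℝ _).add (convex_Ici 0))
    rintro _ ⟨u, hu, rfl⟩
    obtain ⟨m, hmu, hm⟩ := (isPWO_of_wellQuasiOrderedLE M).exists_le_minimal hu
    refine ⟨fun i => (m i : ℝ), subset_convexHull ℝ _ ⟨m, hm, rfl⟩,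
      fun i => (u i : ℝ) - m i, fun i => ?_, by ext; simp⟩
    simpa using hmu i
  · rintro _ ⟨x, hx, t, ht, rfl⟩
    refine isUpperSet_newtonPolyhedron hM (le_add_of_nonneg_right ht) ?_
    exact convexHull_mono (image_mono fun u hu => hu.prop) hx

theorem isClosed_newtonPolyhedron [Finite ι] (hM : IsUpperSet M) :
    IsClosed (newtonPolyhedron M) := by
  obtain ⟨F, hF, hPF⟩ := exists_finite_newtonPolyhedron_eq_convexHull_add_Ici hM
  rw [hPF]
  exact isClosed_Ici.add_left_of_isCompact ((hF.image _).isCompact_convexHull (𝕜 := ℝ))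

end NewtonPolyhedron

section Separation

theorem LinearMap.map_nonneg_of_bddBelow_image_isUpperSet
    (f : (ι → ℝ) →ₗ[ℝ] ℝ) {P : Set (ι → ℝ)} (hP : IsUpperSet P) (hne : P.Nonempty)
    (hf : BddBelow (f '' P)) {v : ι → ℝ} (hv : 0 ≤ v) : 0 ≤ f v := by
  obtain ⟨a, ha⟩ := hne
  obtain ⟨c, hc⟩ := hf
  by_contra! hfv
  -- moving far enough along `v` would push `f` below its lower bound `c`
  set t := (f a - c + 1) / -f v
  have ht : 0 ≤ t := div_nonneg (by linarith [hc ⟨a, ha, rfl⟩]) (by linarith)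
  have hmem : a + t • v ∈ P := hP (le_add_of_nonneg_right (smul_nonneg ht hv)) ha
  have hval : f (a + t • v) = c - 1 := by
    rw [map_add, map_smul, smul_eq_mul, div_mul_eq_mul_div, div_neg, mul_div_assoc,
      div_self hfv.ne, mul_one]
    ring
  linarith [hc ⟨_, hmem, rfl⟩]

variable [Fintype ι] {P : Set (ι → ℝ)}

theorem exists_nonneg_dotProduct_separation (hconv : Convex ℝ P) (hclosed : IsClosed P)
    (hup : IsUpperSet P) {p : ι → ℝ} (hp : p ∉ P) :
    ∃ q, 0 ≤ q ∧ ∃ c, q ⬝ᵥ p < c ∧ ∀ u ∈ P, c < q ⬝ᵥ u := by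
  classical
  rcases P.eq_empty_or_nonempty with rfl | hne
  · exact ⟨0, le_rfl, 1, by simp, by simp⟩
  obtain ⟨f, c, hfp, hfP⟩ := geometric_hahn_banach_point_closed hconv hclosed hp
  set q : ι → ℝ := fun i => f (Pi.single i 1)
  have hf (x : ι → ℝ) : f x = q ⬝ᵥ x := by
    conv_lhs => rw [← Finset.univ_sum_single x]
    refine (map_sum f _ _).trans (Finset.sum_congr rfl fun i _ => ?_)
    rw [mul_comm, ← smul_eq_mul, ← map_smul, ← Pi.single_smul', smul_eq_mul, mul_one]
  have hq : 0 ≤ q := fun i =>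
    (f : (ι → ℝ) →ₗ[ℝ] ℝ).map_nonneg_of_bddBelow_image_isUpperSet hup hne
      ⟨c, by rintro _ ⟨u, hu, rfl⟩; exact (hfP u hu).le⟩ (Pi.single_nonneg.2 zero_le_one)
  exact ⟨q, hq, c, hf p ▸ hfp, fun u hu => hf u ▸ hfP u hu⟩

theorem exists_nonneg_dotProduct_lt_one_le (hconv : Convex ℝ P) (hclosed : IsClosed P)
    (hup : IsUpperSet P) {p : ι → ℝ} (hp0 : 0 ≤ p) (hp : p ∉ P) :
    ∃ q, 0 ≤ q ∧ q ⬝ᵥ p < 1 ∧ ∀ u ∈ P, 1 ≤ q ⬝ᵥ u := by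
  obtain ⟨q, hq, c, hqp, hqP⟩ := exists_nonneg_dotProduct_separation hconv hclosed hup hp
  have hc : 0 < c := (dotProduct_nonneg_of_nonneg hq hp0).trans_lt hqp
  refine ⟨c⁻¹ • q, smul_nonneg (inv_nonneg.2 hc.le) hq, ?_, fun u hu => ?_⟩
  · rw [smul_dotProduct, smul_eq_mul, inv_mul_lt_one₀ hc]
    exact hqp
  · rw [smul_dotProduct, smul_eq_mul, one_le_inv_mul₀ hc]
    exact (hqP u hu).le

end Separation

section Duality

variable [Fintype ι] {Pa Pb : Set (ι → ℝ)} {α β : ℝ}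

theorem le_mul_sInf_add_sum_of_add_one_mem_smul (hα : 0 ≤ α) (hβ : 0 ≤ β) (hPb : Pb.Nonempty)
    (h : ∀ v ∈ Pb, β • v + 1 ∈ α • Pa) {q : ι → ℝ} (hq : ∀ u ∈ Pa, 1 ≤ q ⬝ᵥ u) :
    α ≤ β * sInf ((q ⬝ᵥ ·) '' Pb) + ∑ i, q i := by
  have key : ∀ v ∈ Pb, α - ∑ i, q i ≤ β * q ⬝ᵥ v := by
    intro v hv
    obtain ⟨u, hu, huv⟩ := h v hv
    have hdot := congrArg (q ⬝ᵥ ·) huv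
    simp only [dotProduct_add, dotProduct_smul, dotProduct_one, smul_eq_mul] at hdot
    nlinarith [hq u hu]
  rw [← smul_eq_mul, ← Real.sInf_smul_of_nonneg hβ, ← sub_le_iff_le_add]
  refine le_csInf ((hPb.image _).smul_set) ?_
  rintro _ ⟨_, ⟨v, hv, rfl⟩, rfl⟩
  exact key v hv

theorem add_one_mem_smul_of_le_mul_sInf_add_sum (hconv : Convex ℝ Pa) (hclosed : IsClosed Pa)
    (hup : IsUpperSet Pa) (hPb : Pb ⊆ Ici 0) (hα : 0 < α) (hβ : 0 ≤ β)
    (h : ∀ q, 0 ≤ q → (∀ u ∈ Pa, 1 ≤ q ⬝ᵥ u) → α ≤ β * sInf ((q ⬝ᵥ ·) '' Pb) + ∑ i, q i)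
    {v : ι → ℝ} (hv : v ∈ Pb) : β • v + 1 ∈ α • Pa := by
  rw [mem_smul_set_iff_inv_smul_mem₀ hα.ne']
  by_contra hp
  have hp0 : 0 ≤ α⁻¹ • (β • v + 1) :=
    smul_nonneg (inv_nonneg.2 hα.le) (add_nonneg (smul_nonneg hβ (hPb hv)) zero_le_one)
  obtain ⟨q, hq, hqp, hqPa⟩ := exists_nonneg_dotProduct_lt_one_le hconv hclosed hup hp0 hp
  have hinf : sInf ((q ⬝ᵥ ·) '' Pb) ≤ q ⬝ᵥ v := by
    refine csInf_le ⟨0, ?_⟩ ⟨v, hv, rfl⟩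
    rintro _ ⟨w, hw, rfl⟩
    exact dotProduct_nonneg_of_nonneg hq (hPb hw)
  simp only [dotProduct_smul, dotProduct_add, dotProduct_one, smul_eq_mul] at hqp
  rw [inv_mul_lt_one₀ hα] at hqp
  nlinarith [h q hq hqPa, mul_le_mul_of_nonneg_left hinf hβ]

end Duality

theorem monomial_log_canonical_duality_general (d : ℕ) (Ma Mb : Set (Fin d → ℕ))
    (hMb : Mb.Nonempty)
    (hupa : ∀ u ∈ Ma, ∀ v : Fin d → ℕ, (∀ i, u i ≤ v i) → v ∈ Ma)
    (Pa Pb : Set (Fin d → ℝ))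
    (hPa : Pa = convexHull ℝ ((fun (u : Fin d → ℕ) (i : Fin d) => (u i : ℝ)) '' Ma))
    (hPb : Pb = convexHull ℝ ((fun (u : Fin d → ℕ) (i : Fin d) => (u i : ℝ)) '' Mb))
    (α β : ℚ) (hα : 0 < α) (hβ : 0 ≤ β) :
    (∀ q : Fin d → ℝ, (∀ i, 0 ≤ q i) → (∀ u ∈ Pa, 1 ≤ ∑ i, q i * u i) →
        (α : ℝ) ≤ (β : ℝ) * sInf {x : ℝ | ∃ v ∈ Pb, x = ∑ i, q i * v i} + ∑ i, q i)
      ↔ ∀ v ∈ Pb, (fun i => (β : ℝ) * v i + 1) ∈ (α : ℝ) • Pa := by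
  have hα' : (0 : ℝ) < α := Rat.cast_pos.2 hα
  have hβ' : (0 : ℝ) ≤ β := Rat.cast_nonneg.2 hβ
  have hMa' : IsUpperSet Ma := fun u v huv hu => hupa u hu v huv
  have hPb0 : Pb ⊆ Ici 0 := hPb ▸ newtonPolyhedron_subset_Ici_zero
  have hPbne : Pb.Nonempty := hPb ▸ (hMb.image _).mono (subset_convexHull ℝ _)
  have hS (q : Fin d → ℝ) : {x : ℝ | ∃ v ∈ Pb, x = ∑ i, q i * v i} = (q ⬝ᵥ ·) '' Pb := by
    ext; simp [dotProduct, eq_comm]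
  simp only [hS]
  subst hPa
  exact ⟨fun h v hv => add_one_mem_smul_of_le_mul_sInf_add_sum (convex_convexHull ℝ _)
      (isClosed_newtonPolyhedron hMa') (isUpperSet_newtonPolyhedron hMa') hPb0 hα' hβ' h hv,
    fun h q _ hq => le_mul_sInf_add_sum_of_add_one_mem_smul hα'.le hβ' hPbne h hq⟩

/-- The convex-duality computation in the proof of Proposition 3.9 of
Ein–Lazarsfeld–Mustaţă, *Contact loci in arc spaces*, characterizing when the pair
`(𝔸^d, α·Y - β·Z)` is log canonical for monomial subschemes `Y, Z`.  Non-zero monomial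
ideals `𝔞, 𝔟` are encoded by their non-empty upward-closed exponent sets `Ma, Mb`,
with Newton polyhedra `Pa = conv(Ma)`, `Pb = conv(Mb)`.  For `α ∈ ℚ_{>0}` and
`β ∈ ℚ_{≥0}` the following are equivalent:
(i) for every `q ∈ ℝ^d_{≥0}` with `⟨q, u⟩ ≥ 1` for all `u ∈ Pa`, one has
`β · inf_{v ∈ Pb} ⟨q, v⟩ + ∑ q_i ≥ α`;
(ii) `β · Pb + e ⊆ α · Pa`, where `e = (1,…,1)`. -/
theorem monomial_log_canonical_duality (d : ℕ) (Ma Mb : Set (Fin d → ℕ))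
    (hMa : Ma.Nonempty) (hMb : Mb.Nonempty)
    (hupa : ∀ u ∈ Ma, ∀ v : Fin d → ℕ, (∀ i, u i ≤ v i) → v ∈ Ma)
    (hupb : ∀ u ∈ Mb, ∀ v : Fin d → ℕ, (∀ i, u i ≤ v i) → v ∈ Mb)
    (Pa Pb : Set (Fin d → ℝ))
    (hPa : Pa = convexHull ℝ ((fun (u : Fin d → ℕ) (i : Fin d) => (u i : ℝ)) '' Ma))
    (hPb : Pb = convexHull ℝ ((fun (u : Fin d → ℕ) (i : Fin d) => (u i : ℝ)) '' Mb))
    (α β : ℚ) (hα : 0 < α) (hβ : 0 ≤ β) :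
    (∀ q : Fin d → ℝ, (∀ i, 0 ≤ q i) → (∀ u ∈ Pa, 1 ≤ ∑ i, q i * u i) →
        (α : ℝ) ≤ (β : ℝ) * sInf {x : ℝ | ∃ v ∈ Pb, x = ∑ i, q i * v i} + ∑ i, q i)
      ↔ ∀ v ∈ Pb, (fun i => (β : ℝ) * v i + 1) ∈ (α : ℝ) • Pa :=
  monomial_log_canonical_duality_general d Ma Mb hMb hupa Pa Pb hPa hPb α β hα hβ
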